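/- Let G be a graph whose Laplacian L has only integer eigenvalues, and let u, v be twin vertices of G (N(u)\{v} = N(v)\{u}). Form the weighted graph in which the weight of the edge {u,v} is set to 1/4 (i.e., L' = L + αM with M = (e_u - e_v)(e_u - e_v)^T, where α = 1/4 if u,v are non-adjacent and α = -3/4 if they are adjacent). Then exp(-2πiL') e_u = e_v: the perturbed graph has Laplacian perfect state transfer between u and v at time 2π. Moreover, exp(-2πiL') e_p = e_p for every vertex p ∉ {u,v}. -/

import Mathlib

open Matrix Complex

/-!
Twin vertices make `e_u - e_v` an eigenvector of the Laplacian `L`, so `L` commutes with the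
rank-one matrix `M = (e_u - e_v)(e_u - e_v)ᵀ` and `exp(-2πiL') = exp(-2πiL) exp(-2πiαM)`.
The first factor is `1` because `L` is Hermitian with integer spectrum. The matrix `M` kills
`e_u + e_v` and every `e_p` with `p ∉ {u, v}`, and multiplies `e_u - e_v` by `2`, so the second
factor fixes those vectors and multiplies `e_u - e_v` by `exp(-4πiα) = -1`; since
`e_u = ((e_u + e_v) + (e_u - e_v)) / 2`, it sends `e_u` to `e_v`.
-/

namespace Matrix

variable {ι : Type*} [Fintype ι]

theorem commute_vecMulVec_self_of_mulVec_eq_smul {R : Type*} [CommSemiring R]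
    {A : Matrix ι ι R} (hA : A.IsSymm) {w : ι → R} {μ : R} (h : A *ᵥ w = μ • w) :
    Commute A (vecMulVec w w) := by
  rw [Commute, SemiconjBy, mul_vecMulVec, vecMulVec_mul, ← mulVec_transpose, hA.eq, h,
    smul_vecMulVec, vecMulVec_smul]

variable [DecidableEq ι] {𝕂 : Type*} [RCLike 𝕂]

open scoped Norms.Operator in
theorem exp_mulVec_of_mulVec_eq_smul {A : Matrix ι ι 𝕂} {x : ι → 𝕂} {μ : 𝕂}
    (h : A *ᵥ x = μ • x) : NormedSpace.exp A *ᵥ x = NormedSpace.exp μ • x := by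
  have hpow (k : ℕ) : A ^ k *ᵥ x = μ ^ k • x := by
    induction k with
    | zero => simp
    | succ k ih => rw [pow_succ', ← mulVec_mulVec, ih, mulVec_smul, h, smul_smul, pow_succ]
  have hA := (NormedSpace.exp_series_hasSum_exp' (𝕂 := 𝕂) A).map (mulVec.addMonoidHomLeft x)
    (continuous_id.matrix_mulVec continuous_const)
  refine hA.unique ?_
  convert (NormedSpace.exp_series_hasSum_exp' (𝕂 := 𝕂) μ).smul_const x using 1
  ext k : 1
  simp [mulVec.addMonoidHomLeft, smul_mulVec, hpow, smul_smul]

theorem exp_smul_vecMulVec_mulVec_of_dotProduct_eq_zero (t : 𝕂) {w x : ι → 𝕂}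
    (h : w ⬝ᵥ x = 0) : NormedSpace.exp (t • vecMulVec w w) *ᵥ x = x := by
  have hx : (t • vecMulVec w w) *ᵥ x = (0 : 𝕂) • x := by
    simp [smul_mulVec, vecMulVec_mulVec, h]
  simpa using exp_mulVec_of_mulVec_eq_smul hx

theorem exp_smul_vecMulVec_mulVec_self (t : 𝕂) (w : ι → 𝕂) :
    NormedSpace.exp (t • vecMulVec w w) *ᵥ w = NormedSpace.exp (t * (w ⬝ᵥ w)) • w := by
  refine exp_mulVec_of_mulVec_eq_smul ?_
  rw [smul_mulVec, vecMulVec_mulVec, op_smul_eq_smul, smul_smul]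

theorem exp_smul_vecMulVec_single_sub_single_mulVec_single {u v : ι} (huv : u ≠ v) {t : 𝕂}
    (ht : NormedSpace.exp (2 * t) = -1) :
    NormedSpace.exp
        (t • vecMulVec (Pi.single u 1 - Pi.single v 1) (Pi.single u 1 - Pi.single v 1)) *ᵥ
      Pi.single u 1 = (Pi.single v 1 : ι → 𝕂) := by
  set w : ι → 𝕂 := Pi.single u 1 - Pi.single v 1
  set s : ι → 𝕂 := Pi.single u 1 + Pi.single v 1
  have hws : w ⬝ᵥ s = 0 := by simp [w, s, huv, huv.symm]
  have hww : w ⬝ᵥ w = 2 := by simp [w, huv, huv.symm]; norm_num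
  have hu : (Pi.single u 1 : ι → 𝕂) = (2⁻¹ : 𝕂) • s + (2⁻¹ : 𝕂) • w := by
    ext i; simp only [s, w, Pi.add_apply, Pi.sub_apply, Pi.smul_apply, smul_eq_mul]; ring
  rw [hu, mulVec_add, mulVec_smul, mulVec_smul,
    exp_smul_vecMulVec_mulVec_of_dotProduct_eq_zero t hws, exp_smul_vecMulVec_mulVec_self, hww,
    mul_comm, ht]
  ext i; simp only [s, w, Pi.add_apply, Pi.sub_apply, Pi.smul_apply, smul_eq_mul]; ring

theorem spectrum_map_ofReal_subset (A : Matrix ι ι ℝ) :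
    spectrum ℝ (A.map ((↑) : ℝ → 𝕂)) ⊆ spectrum ℝ A :=
  AlgHom.spectrum_apply_subset (RCLike.ofRealAm.mapMatrix) A

theorem IsHermitian.exp_neg_two_pi_I_smul_eq_one {A : Matrix ι ι ℂ} (hA : A.IsHermitian)
    (hint : ∀ μ ∈ spectrum ℝ A, ∃ k : ℤ, μ = k) :
    NormedSpace.exp ((-(2 * Real.pi * I)) • A) = 1 := by
  set U : Matrix ι ι ℂ := (hA.eigenvectorUnitary : Matrix ι ι ℂ)
  have hfix (j : ι) : NormedSpace.exp ((-(2 * Real.pi * I)) • A) *ᵥ ⇑(hA.eigenvectorBasis j) =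
      ⇑(hA.eigenvectorBasis j) := by
    obtain ⟨k, hk⟩ := hint _ (hA.eigenvalues_mem_spectrum_real j)
    have hj : ((-(2 * Real.pi * I)) • A) *ᵥ ⇑(hA.eigenvectorBasis j) =
        (((-k : ℤ) : ℂ) * (2 * Real.pi * I)) • ⇑(hA.eigenvectorBasis j) := by
      rw [smul_mulVec, hA.mulVec_eigenvectorBasis, hk, RCLike.real_smul_eq_coe_smul (K := ℂ),
        smul_smul]
      push_cast; ring_nf
    rw [exp_mulVec_of_mulVec_eq_smul hj, ← Complex.exp_eq_exp_ℂ, exp_int_mul_two_pi_mul_I,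
      one_smul]
  have hU : NormedSpace.exp ((-(2 * Real.pi * I)) • A) * U = U :=
    ext_of_mulVec_single fun j => by
      rw [← mulVec_mulVec, hA.eigenvectorUnitary_mulVec, hfix]
  simpa [U, mul_assoc] using congrArg (· * star U) hU

end Matrix

namespace SimpleGraph

variable {V : Type*} (G : SimpleGraph V)

def AreTwins (u v : V) : Prop :=
  ∀ c, c ≠ u → c ≠ v → (G.Adj u c ↔ G.Adj v c)

variable {G} [Fintype V] [DecidableRel G.Adj]

theorem AreTwins.degree_eq [DecidableEq V] {u v : V} (h : G.AreTwins u v) :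
    G.degree u = G.degree v := by
  refine Finset.card_equiv (Equiv.swap u v) fun c => ?_
  simp only [mem_neighborFinset]
  by_cases hcu : c = u
  · subst hcu; simp
  by_cases hcv : c = v
  · subst hcv; simp [G.adj_comm]
  · rw [Equiv.swap_apply_of_ne_of_ne hcu hcv]; exact h c hcu hcv

theorem AreTwins.lapMatrix_mulVec_single_sub_single [DecidableEq V] {R : Type*} [Ring R]
    {u v : V} (huv : u ≠ v) (h : G.AreTwins u v) :
    G.lapMatrix R *ᵥ (Pi.single u 1 - Pi.single v 1) =
      ((G.degree u : R) + if G.Adj u v then 1 else 0) • (Pi.single u 1 - Pi.single v 1) := by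
  ext c
  simp only [lapMatrix_mulVec_apply, Pi.sub_apply, Finset.sum_sub_distrib, Pi.single_apply,
    Finset.sum_ite_eq', mem_neighborFinset, Pi.smul_apply, smul_eq_mul]
  by_cases hcu : c = u
  · subst hcu; simp [huv]
  by_cases hcv : c = v
  · subst hcv; simp [huv.symm, h.degree_eq, G.adj_comm]; abel
  · simp [hcu, hcv, G.adj_comm c, h c hcu hcv]

theorem map_lapMatrix {R S : Type*} [Ring R] [Ring S] [DecidableEq V] (f : R →+* S) :
    (G.lapMatrix R).map f = G.lapMatrix S := by
  ext i j
  by_cases hij : i = j <;> simp [lapMatrix, degMatrix, adjMatrix_apply, hij, apply_ite f]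

end SimpleGraph

/-- Let `G` be a Laplacian integral graph with twin vertices `u ≠ v`. Resetting
the weight of the edge `{u,v}` to `1/4` (i.e. `α = -3/4` if adjacent, `α = 1/4`
otherwise) yields Laplacian perfect state transfer between `u` and `v` at time
`2π`, and periodicity `exp(-2πiL') e_p = e_p` at every other vertex `p`. -/
theorem integral_graph_quarter_edge_pst {n : ℕ} (G : SimpleGraph (Fin n))
    [DecidableRel G.Adj] (u v : Fin n) (huv : u ≠ v)
    (htwin : ∀ c : Fin n, c ≠ u → c ≠ v → (G.Adj u c ↔ G.Adj v c))
    (hint : ∀ μ ∈ spectrum ℝ (G.lapMatrix ℝ), ∃ k : ℤ, μ = (k : ℝ)) :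
    let α : ℝ := if G.Adj u v then -(3 / 4) else 1 / 4
    let L' : Matrix (Fin n) (Fin n) ℂ :=
      (G.lapMatrix ℝ).map Complex.ofReal + (α : ℂ) •
        vecMulVec (Pi.single u 1 - Pi.single v 1) (Pi.single u 1 - Pi.single v 1)
    NormedSpace.exp ((-(2 * Real.pi * I)) • L') *ᵥ Pi.single u 1 =
      Pi.single v 1 ∧
    ∀ p : Fin n, p ≠ u → p ≠ v →
      NormedSpace.exp ((-(2 * Real.pi * I)) • L') *ᵥ Pi.single p 1 =
        Pi.single p 1 := by
  intro α L'
  set w : Fin n → ℂ := Pi.single u 1 - Pi.single v 1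
  have hL : (G.lapMatrix ℝ).map ofReal = G.lapMatrix ℂ := G.map_lapMatrix ofRealHom
  have hperiodic : NormedSpace.exp ((-(2 * Real.pi * I)) • G.lapMatrix ℂ) = 1 :=
    (G.isHermitian_lapMatrix ℂ).exp_neg_two_pi_I_smul_eq_one fun μ hμ =>
      hint μ (spectrum_map_ofReal_subset _ (hL ▸ hμ))
  have hcomm : Commute (G.lapMatrix ℂ) (vecMulVec w w) :=
    commute_vecMulVec_self_of_mulVec_eq_smul (G.isSymm_lapMatrix ℂ)
      (SimpleGraph.AreTwins.lapMatrix_mulVec_single_sub_single huv htwin)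
  have hexp : NormedSpace.exp ((-(2 * Real.pi * I)) • L') =
      NormedSpace.exp ((-(2 * Real.pi * I) * α) • vecMulVec w w) := by
    rw [show L' = G.lapMatrix ℂ + (α : ℂ) • vecMulVec w w from hL ▸ rfl, smul_add, smul_smul,
      exp_add_of_commute _ _ ((hcomm.smul_right _).smul_left _), hperiodic, one_mul]
  have hα : NormedSpace.exp (2 * (-(2 * Real.pi * I) * α)) = -1 := by
    obtain ⟨k, hk⟩ :
        ∃ k : ℤ, 2 * (-(2 * Real.pi * I) * α) = Real.pi * I + k * (2 * Real.pi * I) := by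
      by_cases hadj : G.Adj u v
      · exact ⟨1, by simp only [α, hadj, if_true]; push_cast; ring⟩
      · exact ⟨-1, by simp only [α, hadj, if_false]; push_cast; ring⟩
    rw [← Complex.exp_eq_exp_ℂ, hk, Complex.exp_add, exp_pi_mul_I, exp_int_mul_two_pi_mul_I,
      mul_one]
  refine ⟨?_, fun p hpu hpv => ?_⟩
  · rw [hexp]; exact exp_smul_vecMulVec_single_sub_single_mulVec_single huv hα
  · rw [hexp]
    exact exp_smul_vecMulVec_mulVec_of_dotProduct_eq_zero _ (by simp [w, hpu, hpv])
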